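/- Let n be odd, f a discontinuous n-monomial, A(h) = f(h)/h^n for h ≠ 0, with sup_{h≠0} A(h) = +∞ and β = inf_{h≠0} A(h) ∈ ℝ. Then the closure of the graph of f equals {(x,y) : x ≤ 0 and y ≤ β x^n} ∪ {(x,y) : x ≥ 0 and y ≥ β x^n}. -/

import Mathlib

noncomputable def fdiff (h : ℝ) (f : ℝ → ℝ) : ℝ → ℝ := fun x => f (x + h) - f x

def IsMonomial (n : ℕ) (f : ℝ → ℝ) : Prop :=
  ∀ x h : ℝ, (1 / (n.factorial : ℝ)) * ((fdiff h)^[n] f) x = f h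

/-!
Newton's forward-difference formula makes an `n`-monomial a polynomial of degree at most `n`
along every rational line `t ↦ b + t a` (`t ∈ ℚ`), with `X ^ n`-coefficient `f a`; in particular
`f (q h) = q ^ n f h` for rational `q`. So the ratio `A h = f h / h ^ n` is constant on rational
multiples of `h`, and by density the closure of the graph contains the whole curve
`x ↦ (x, v x ^ n)` for every `v` in the closure of the range of `A`. Along a segment between two
positive points, `A` agrees at rational parameters with a continuous function, so by the
intermediate value theorem that closure is `[β, ∞)`. This yields the two half-regions for
`x ≠ 0`; the points `(0, y)` are reached because `A` is unbounded above and `x ↦ v x ^ n` is onto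
for odd `n`.
-/

open Polynomial Finset
open scoped Nat

lemma Rat.exists_natCast_div_sub_natCast (q : ℚ) :
    ∃ k N d : ℕ, 0 < d ∧ (q : ℝ) = k / d - N := by
  refine ⟨(q.num + q.num.natAbs * q.den).toNat, q.num.natAbs, q.den, q.den_pos, ?_⟩
  have hnonneg : 0 ≤ q.num + q.num.natAbs * q.den := by
    have hden : (1 : ℤ) ≤ q.den := by exact_mod_cast q.den_pos
    rw [Int.natCast_natAbs]
    nlinarith [abs_nonneg q.num, neg_abs_le q.num]
  rw [← Int.cast_natCast, Int.toNat_of_nonneg hnonneg, Rat.cast_def]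
  push_cast [Nat.cast_natAbs]
  field_simp
  ring

lemma eval_ratCast_of_forall_exists_poly {g : ℝ → ℝ}
    (hg : ∀ y s : ℝ, ∃ P : ℝ[X], ∀ m : ℕ, g (y + m * s) = P.eval (m : ℝ))
    {a b : ℝ} {P : ℝ[X]} (hP : ∀ m : ℕ, g (b + m * a) = P.eval (m : ℝ)) (q : ℚ) :
    g (b + q * a) = P.eval (q : ℝ) := by
  -- With `q = k / d - N`, `b + q a` is the `k`-th point of the progression from `b - N a` with step
  -- `a / d`, whose polynomial is `P` reparametrized.
  obtain ⟨k, N, d, hd, hq⟩ := q.exists_natCast_div_sub_natCast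
  have hd' : (d : ℝ) ≠ 0 := by positivity
  obtain ⟨Q, hQ⟩ := hg (b - N * a) (a / d)
  have hQP : Q.comp (C (d : ℝ) * (X + C (N : ℝ))) = P := by
    refine eq_of_infinite_eval_eq _ _ ((Set.infinite_range_of_injective Nat.cast_injective).mono ?_)
    rintro _ ⟨m, rfl⟩
    have := hQ (d * (m + N))
    push_cast at this
    simp only [Set.mem_ofPred_eq, eval_comp, eval_mul, eval_C, eval_add, eval_X, ← this, ← hP m]
    congr 1
    field_simp
    ring
  have := hQ k
  rw [← hQP, eval_comp]
  simp only [eval_mul, eval_C, eval_add, eval_X, hq]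
  rw [sub_add_cancel, mul_div_cancel₀ _ hd', ← this]
  congr 1
  field_simp
  ring

def monomialRatios (n : ℕ) (f : ℝ → ℝ) : Set ℝ := {y | ∃ h : ℝ, h ≠ 0 ∧ y = f h / h ^ n}

lemma Odd.le_div_pow_iff {n : ℕ} (hn : Odd n) {x : ℝ} (hx : x ≠ 0) (β y : ℝ) :
    β ≤ y / x ^ n ↔ (x ≤ 0 ∧ y ≤ β * x ^ n) ∨ (0 ≤ x ∧ β * x ^ n ≤ y) := by
  rcases hx.lt_or_gt with hneg | hpos
  · simp [le_div_iff_of_neg (hn.pow_neg hneg), hneg.le, hneg.not_ge]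
  · simp [le_div_iff₀ (pow_pos hpos n), hpos.le, hpos.not_ge]

namespace IsMonomial

variable {n : ℕ} {f : ℝ → ℝ}

lemma fwdDiff_iter_eq (hf : IsMonomial n f) (h x : ℝ) : (fwdDiff h)^[n] f x = n ! * f h := by
  rw [← hf x h, ← mul_assoc, mul_one_div_cancel (by positivity), one_mul]
  rfl

lemma fwdDiff_iter_eq_zero (hf : IsMonomial n f) {k : ℕ} (hk : n < k) (h : ℝ) :
    (fwdDiff h)^[k] f = 0 := by
  obtain ⟨j, rfl⟩ := Nat.exists_eq_add_of_lt hk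
  have hconst : (fwdDiff h)^[n] f = fun _ ↦ n ! * f h := funext (hf.fwdDiff_iter_eq h)
  rw [add_assoc, add_comm, Function.iterate_add_apply, Function.iterate_succ_apply, hconst,
    fwdDiff_const]
  exact funext fun x ↦ by simp [fwdDiff_iter_eq_sum_shift]

/-- Newton's forward-difference formula, which stops at the `n`-th difference. -/
lemma exists_poly_nat (hf : IsMonomial n f) (y h : ℝ) :
    ∃ P : ℝ[X], P.coeff n = f h ∧ ∀ m : ℕ, f (y + m * h) = P.eval (m : ℝ) := by
  have hlead : (descPochhammer ℝ n).coeff n = 1 := by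
    simpa [descPochhammer_natDegree] using (monic_descPochhammer ℝ n).coeff_natDegree
  refine ⟨∑ k ∈ range (n + 1), C ((fwdDiff h)^[k] f y / k !) * descPochhammer ℝ k, ?_, fun m ↦ ?_⟩
  · rw [finsetSum_coeff, sum_range_succ, sum_eq_zero fun k hk ↦ ?_, zero_add, coeff_C_mul, hlead,
      mul_one, hf.fwdDiff_iter_eq, mul_div_cancel_left₀ _ (by positivity)]
    rw [coeff_C_mul, coeff_eq_zero_of_natDegree_lt (by simpa using hk), mul_zero]
  · have heval : ∀ k, ((C ((fwdDiff h)^[k] f y / k !) * descPochhammer ℝ k).eval (m : ℝ)) =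
        m.choose k • (fwdDiff h)^[k] f y := fun k ↦ by
      rw [eval_mul, eval_C, descPochhammer_eval_eq_descFactorial,
        Nat.descFactorial_eq_factorial_mul_choose, nsmul_eq_mul]
      push_cast
      field_simp
    rw [← nsmul_eq_mul, shift_eq_sum_fwdDiff_iter h f m y, eval_finsetSum]
    simp_rw [heval]
    calc ∑ k ∈ range (m + 1), m.choose k • (fwdDiff h)^[k] f y
        = ∑ k ∈ range (m + n + 1), m.choose k • (fwdDiff h)^[k] f y :=
          sum_subset (range_subset_range.2 (by omega)) fun k _ hk ↦ by
            rw [Nat.choose_eq_zero_of_lt (by simpa using hk), zero_smul]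
      _ = ∑ k ∈ range (n + 1), m.choose k • (fwdDiff h)^[k] f y :=
          (sum_subset (range_subset_range.2 (by omega)) fun k _ hk ↦ by
            rw [hf.fwdDiff_iter_eq_zero (by simpa using hk), Pi.zero_apply, smul_zero]).symm

lemma eval_ratCast (hf : IsMonomial n f) {a b : ℝ} {P : ℝ[X]}
    (hP : ∀ m : ℕ, f (b + m * a) = P.eval (m : ℝ)) (q : ℚ) : f (b + q * a) = P.eval (q : ℝ) :=
  eval_ratCast_of_forall_exists_poly (fun y s ↦ (hf.exists_poly_nat y s).imp fun _ ↦ And.right) hP q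

lemma map_ratCast_mul (hf : IsMonomial n f) (q : ℚ) (h : ℝ) : f (q * h) = q ^ n * f h := by
  obtain ⟨P, hPn, hP⟩ := hf.exists_poly_nat 0 h
  obtain ⟨Q, hQn, hQ⟩ := hf.exists_poly_nat 0 (q * h)
  have hQP : Q = P.comp (C (q : ℝ) * X) := by
    refine eq_of_infinite_eval_eq _ _ ((Set.infinite_range_of_injective Nat.cast_injective).mono ?_)
    rintro _ ⟨m, rfl⟩
    have := hf.eval_ratCast hP (q * m)
    push_cast at this
    simp only [Set.mem_ofPred_eq, eval_comp, eval_mul, eval_C, eval_X, ← hQ m, ← this]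
    ring_nf
  rw [← hQn, hQP, comp_C_mul_X_coeff, hPn, mul_comm]

lemma map_zero (hf : IsMonomial n f) (hn : n ≠ 0) : f 0 = 0 := by
  simpa [hn] using hf.map_ratCast_mul 0 0

lemma map_neg (hf : IsMonomial n f) (hn : Odd n) (h : ℝ) : f (-h) = -f h := by
  simpa [hn.neg_one_pow] using hf.map_ratCast_mul (-1) h

lemma mem_closure_graph_of_mem_ratios (hf : IsMonomial n f) {v : ℝ} (hv : v ∈ monomialRatios n f)
    (x : ℝ) : (x, v * x ^ n) ∈ closure {p : ℝ × ℝ | p.2 = f p.1} := by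
  obtain ⟨h, hh, rfl⟩ := hv
  have hx : x / h ∈ closure (Set.range ((↑) : ℚ → ℝ)) := by
    rw [Rat.denseRange_cast.closure_eq]; trivial
  have := map_mem_closure (f := fun t : ℝ ↦ (t * h, f h / h ^ n * (t * h) ^ n)) (by fun_prop) hx
    (t := {p : ℝ × ℝ | p.2 = f p.1}) ?_
  · simpa [div_mul_cancel₀ x hh] using this
  · rintro _ ⟨q, rfl⟩
    show f h / h ^ n * (q * h) ^ n = f (q * h)
    rw [hf.map_ratCast_mul, mul_pow]
    field_simp

lemma mem_closure_graph_of_mem_closure_ratios (hf : IsMonomial n f) {v : ℝ}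
    (hv : v ∈ closure (monomialRatios n f)) (x : ℝ) :
    (x, v * x ^ n) ∈ closure {p : ℝ × ℝ | p.2 = f p.1} := by
  simpa using map_mem_closure (f := fun w : ℝ ↦ (x, w * x ^ n)) (by fun_prop) hv
    fun _ hw ↦ hf.mem_closure_graph_of_mem_ratios hw x

lemma mk_zero_mem_closure_graph (hf : IsMonomial n f) (hn : Odd n)
    (hsup : ∀ M : ℝ, ∃ h : ℝ, h ≠ 0 ∧ M < f h / h ^ n) (y : ℝ) :
    ((0 : ℝ), y) ∈ closure {p : ℝ × ℝ | p.2 = f p.1} := by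
  rw [← closure_closure, Metric.mem_closure_iff]
  intro ε hε
  have hδ : 0 < (ε / 2) ^ n := by positivity
  obtain ⟨h, hh, hv⟩ := hsup (|y| / (ε / 2) ^ n)
  set v := f h / h ^ n
  have hy : |y| ≤ v * (ε / 2) ^ n := (div_le_iff₀ hδ).mp hv.le
  obtain ⟨z, hz, rfl⟩ : y ∈ (fun z ↦ v * z ^ n) '' Set.Icc (-(ε / 2)) (ε / 2) := by
    refine intermediate_value_Icc (by linarith) (by fun_prop) ?_
    rw [hn.neg_pow, mul_neg]
    exact abs_le.mp hy
  refine ⟨(z, v * z ^ n), hf.mem_closure_graph_of_mem_ratios ⟨h, hh, rfl⟩ z, ?_⟩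
  rw [Prod.dist_eq, dist_self, max_eq_left dist_nonneg, dist_comm, Real.dist_0_eq_abs]
  exact (abs_le.mpr hz).trans_lt (by linarith)

lemma uIcc_subset_closure_ratios (hf : IsMonomial n f) {a b : ℝ} (ha : 0 < a) (hb : 0 < b) :
    Set.uIcc (f b / b ^ n) (f a / a ^ n) ⊆ closure (monomialRatios n f) := by
  obtain ⟨P, -, hP⟩ := hf.exists_poly_nat b (a - b)
  -- `H t` is the ratio at `b + t (a - b)` whenever `t` is rational.
  set H : ℝ → ℝ := fun t ↦ P.eval t / (b + t * (a - b)) ^ n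
  have hpos : ∀ t ∈ Set.Icc (0 : ℝ) 1, 0 < b + t * (a - b) := fun t ⟨h0, h1⟩ ↦ by
    nlinarith [mul_nonneg h0 ha.le, mul_nonneg (sub_nonneg.mpr h1) hb.le]
  have hH : ContinuousOn H (Set.Icc 0 1) :=
    P.continuous.continuousOn.div (by fun_prop) fun t ht ↦ (pow_pos (hpos t ht) n).ne'
  have hH0 : H 0 = f b / b ^ n := by simpa [H] using congrArg (· / b ^ n) (hP 0).symm
  have hH1 : H 1 = f a / a ^ n := by simpa [H] using congrArg (· / a ^ n) (hP 1).symm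
  set S := Set.Icc (0 : ℝ) 1 ∩ Set.range ((↑) : ℚ → ℝ)
  have hS : Set.Icc (0 : ℝ) 1 ⊆ closure S := by
    rw [← closure_Ioo zero_ne_one]
    exact closure_minimal ((Rat.denseRange_cast.open_subset_closure_inter isOpen_Ioo).trans
      (closure_mono (Set.inter_subset_inter_left _ Set.Ioo_subset_Icc_self))) isClosed_closure
  have hHS : H '' S ⊆ monomialRatios n f := by
    rintro _ ⟨_, ⟨ht, q, rfl⟩, rfl⟩
    exact ⟨b + q * (a - b), (hpos q ht).ne', by simp only [H, ← hf.eval_ratCast hP q]⟩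
  intro w hw
  rw [← hH0, ← hH1] at hw
  obtain ⟨t, ht, rfl⟩ := intermediate_value_uIcc (by rwa [Set.uIcc_of_le zero_le_one]) hw
  rw [Set.uIcc_of_le zero_le_one] at ht
  exact closure_mono hHS (((hH t ht).mono Set.inter_subset_left).mem_closure_image (hS ht))

lemma Ici_subset_closure_ratios (hf : IsMonomial n f) (hn : Odd n)
    (hsup : ∀ M : ℝ, ∃ h : ℝ, h ≠ 0 ∧ M < f h / h ^ n) {β : ℝ}
    (hβ : IsGLB (monomialRatios n f) β) : Set.Ici β ⊆ closure (monomialRatios n f) := by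
  have habs : ∀ h, f |h| / |h| ^ n = f h / h ^ n := fun h ↦ by
    rcases abs_choice h with h' | h' <;> simp [h', hf.map_neg hn, hn.neg_pow, neg_div_neg_eq]
  intro w hw
  rcases (Set.mem_Ici.mp hw).eq_or_lt with rfl | hlt
  · obtain ⟨h, hh, -⟩ := hsup 0
    exact hβ.mem_closure ⟨_, h, hh, rfl⟩
  obtain ⟨_, ⟨h₁, hh₁, rfl⟩, -, hlt₁⟩ := hβ.exists_between hlt
  obtain ⟨h₂, hh₂, hlt₂⟩ := hsup w
  refine hf.uIcc_subset_closure_ratios (abs_pos.mpr hh₂) (abs_pos.mpr hh₁) ?_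
  rw [habs, habs]
  exact Set.Icc_subset_uIcc ⟨hlt₁.le, hlt₂.le⟩

end IsMonomial

theorem stmt15_general (n : ℕ) (hn : Odd n) (f : ℝ → ℝ) (hf : IsMonomial n f)
    (hsup : ∀ M : ℝ, ∃ h : ℝ, h ≠ 0 ∧ M < f h / h ^ n)
    (β : ℝ) (hβ : IsGLB {y : ℝ | ∃ h : ℝ, h ≠ 0 ∧ y = f h / h ^ n} β) :
    closure {p : ℝ × ℝ | p.2 = f p.1} =
      {p : ℝ × ℝ | p.1 ≤ 0 ∧ p.2 ≤ β * p.1 ^ n} ∪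
      {p : ℝ × ℝ | 0 ≤ p.1 ∧ β * p.1 ^ n ≤ p.2} := by
  refine (closure_minimal ?_ ?_).antisymm ?_
  · rintro ⟨x, y⟩ (rfl : y = f x)
    rcases eq_or_ne x 0 with rfl | hx
    · exact Or.inr ⟨le_rfl, by simp [hf.map_zero hn.pos.ne', hn.pos.ne']⟩
    · exact (hn.le_div_pow_iff hx β (f x)).mp (hβ.1 ⟨x, hx, rfl⟩)
  · exact ((isClosed_le continuous_fst continuous_const).inter
      (isClosed_le continuous_snd (by fun_prop))).union
      ((isClosed_le continuous_const continuous_fst).inter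
        (isClosed_le (by fun_prop) continuous_snd))
  · rintro ⟨x, y⟩ hxy
    rcases eq_or_ne x 0 with rfl | hx
    · exact hf.mk_zero_mem_closure_graph hn hsup y
    have hv : β ≤ y / x ^ n := (hn.le_div_pow_iff hx β y).mpr hxy
    simpa [div_mul_cancel₀ y (pow_ne_zero n hx)] using
      hf.mem_closure_graph_of_mem_closure_ratios (hf.Ici_subset_closure_ratios hn hsup hβ hv) x

theorem stmt15 (n : ℕ) (hn : Odd n) (f : ℝ → ℝ) (hf : IsMonomial n f)
    (hdisc : ¬ Continuous f)
    (hsup : ∀ M : ℝ, ∃ h : ℝ, h ≠ 0 ∧ M < f h / h ^ n)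
    (β : ℝ) (hβ : IsGLB {y : ℝ | ∃ h : ℝ, h ≠ 0 ∧ y = f h / h ^ n} β) :
    closure {p : ℝ × ℝ | p.2 = f p.1} =
      {p : ℝ × ℝ | p.1 ≤ 0 ∧ p.2 ≤ β * p.1 ^ n} ∪
      {p : ℝ × ℝ | 0 ≤ p.1 ∧ β * p.1 ^ n ≤ p.2} :=
  stmt15_general n hn f hf hsup β hβ
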